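/- Let U → V → W be an exact sequence of moderate persistence modules (exact at V), where moderate means b_ε is finite for all ε > 0. Then for every ε > 0, b_{2ε}(V) ≤ b_ε(U) + b_ε(W), where b_δ denotes the number of bars of length ≥ δ in the barcode. -/

import Mathlib

open scoped Classical

/-- A persistence module over a field `F`: a family of `F`-vector spaces indexed by `ℝ`
with functorial structure ("inclusion") maps. -/
structure PersMod (F : Type) [Field F] where
  V : ℝ → Type
  [acg : ∀ t, AddCommGroup (V t)]
  [mod : ∀ t, Module F (V t)]
  map : ∀ s t : ℝ, s ≤ t → (V s →ₗ[F] V t)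
  map_id : ∀ t (x : V t), map t t le_rfl x = x
  map_comp : ∀ s t u (hst : s ≤ t) (htu : t ≤ u) (x : V s),
    map t u htu (map s t hst x) = map s u (hst.trans htu) x

attribute [instance] PersMod.acg PersMod.mod

namespace PersMod

variable (F : Type) [Field F]

/-- A bar `(a, b)` (the interval `[a, b)`) is alive at time `t` iff `a ≤ t < b`. -/
def alive (p : ℝ × EReal) (t : ℝ) : Prop := p.1 ≤ t ∧ (t : EReal) < p.2

/-- The interval persistence module `⊕_{i} F[aᵢ, bᵢ)` associated to a family of bars. -/
noncomputable def intervalSum {ι : Type} (bars : ι → ℝ × EReal) : PersMod F where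
  V t := (Finsupp.supported F F {i | alive (bars i) t} : Submodule F (ι →₀ F))
  map s t _ :=
    (Finsupp.restrictDom F F {i | alive (bars i) t}).comp
      (Submodule.subtype (Finsupp.supported F F {i | alive (bars i) s}))
  map_id t x := by
    apply Subtype.ext
    ext a
    simp only [LinearMap.comp_apply, Submodule.subtype_apply, Finsupp.restrictDom_apply,
      Finsupp.filter_apply]
    split_ifs with hmem
    · rfl
    · by_contra hne
      exact hmem ((Finsupp.mem_supported F _).mp x.2
        (Finsupp.mem_support_iff.mpr fun hz => hne hz.symm))
  map_comp s t u hst htu x := by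
    apply Subtype.ext
    ext a
    simp only [LinearMap.comp_apply, Submodule.subtype_apply, Finsupp.restrictDom_apply,
      Finsupp.filter_apply]
    by_cases hu : a ∈ {i | alive (bars i) u}
    · rw [if_pos hu, if_pos hu]
      by_cases hs : (x : ι →₀ F) a = 0
      · simp [hs]
      · have has : alive (bars a) s :=
          (Finsupp.mem_supported F _).mp x.2 (Finsupp.mem_support_iff.mpr hs)
        have hu' : alive (bars a) u := hu
        have hat : alive (bars a) t :=
          ⟨has.1.trans hst, lt_of_le_of_lt (EReal.coe_le_coe_iff.mpr htu) hu'.2⟩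
        rw [if_pos (show a ∈ {i | alive (bars i) t} from hat)]
    · rw [if_neg hu, if_neg hu]
  
/-- `M` has barcode `bars` iff `M` is isomorphic, as a persistence module, to the direct
sum of the interval modules `F[aᵢ, bᵢ)`. -/
noncomputable def HasBarcode (M : PersMod F) {ι : Type} (bars : ι → ℝ × EReal) : Prop :=
  ∃ e : ∀ t, M.V t ≃ₗ[F] (intervalSum F bars).V t,
    ∀ s t (h : s ≤ t) (x : M.V s),
      e t (M.map s t h x) = (intervalSum F bars).map s t h (e s x)

/-- Length of a bar. -/
noncomputable def barLength (p : ℝ × EReal) : EReal := p.2 - (p.1 : EReal)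

/-- The number of bars of length at least `ε`. -/
noncomputable def bCount {ι : Type} (bars : ι → ℝ × EReal) (ε : ℝ) : ℕ :=
  Nat.card {i : ι // (ε : EReal) ≤ barLength (bars i)}

end PersMod

open PersMod

/-!
List the bars of `V` of length at least `2δ` by increasing birth `a₀ ≤ a₁ ≤ ⋯`. Elimination along
this list attaches to the `j`-th bar an element `xⱼ ∈ V_{aⱼ}` with coordinate `1` on that bar, and a
pivot bar. If `g xⱼ` survives to time `aⱼ + δ`, the pivot is a bar of `W` carrying a nonzero
coordinate of it, so it is alive on `[aⱼ, aⱼ + δ]`. Otherwise, by exactness, `xⱼ` pushed to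
`aⱼ + δ` lifts to some `uⱼ ∈ U_{aⱼ+δ}`; as `xⱼ` survives until its bar dies, at time at least
`aⱼ + 2δ`, naturality forces `uⱼ` to have a nonzero coordinate on a bar of `U` alive at `aⱼ + δ`
that dies no earlier, and this is the pivot. Either way the pivot has length at least `δ`.
Before choosing it, one subtracts from `xⱼ` (and `uⱼ`) combinations of the earlier `xᵢ` (and
`uᵢ`), pushed forward, so that all coordinates on earlier pivots vanish; hence distinct bars of `V`
get distinct pivots.
-/

theorem exists_mem_span_forall_apply_sub_eq_zero {K N κ : Type*} [DivisionRing K]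
    [AddCommGroup N] [Module K N] [LinearOrder κ] (J : Finset κ) (y : κ → N)
    (φ : κ → N →ₗ[K] K) (htri : ∀ i ∈ J, ∀ j ∈ J, j < i → φ j (y i) = 0)
    (hdiag : ∀ i ∈ J, φ i (y i) = 0 → φ i = 0) (z : N) :
    ∃ w ∈ Submodule.span K (y '' J), ∀ i ∈ J, φ i (z - w) = 0 := by
  induction J using Finset.induction_on_max with
  | empty => exact ⟨0, zero_mem _, by simp⟩
  | insert a s ha ih =>
    obtain ⟨w, hw, hzw⟩ := ih
      (fun i hi j hj => htri i (Finset.mem_insert_of_mem hi) j (Finset.mem_insert_of_mem hj))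
      (fun i hi => hdiag i (Finset.mem_insert_of_mem hi))
    -- if `φ a (y a) = 0` then `φ a = 0`, so the division by zero is harmless
    refine ⟨w + (φ a (z - w) / φ a (y a)) • y a, add_mem ?_ ?_, fun i hi => ?_⟩
    · exact Submodule.span_mono (Set.image_mono (by simp)) hw
    · exact Submodule.smul_mem _ _ (Submodule.subset_span ⟨a, by simp, rfl⟩)
    rw [sub_add_eq_sub_sub, map_sub, map_smul, smul_eq_mul]
    rcases Finset.mem_insert.mp hi with rfl | hi
    · by_cases h : φ i (y i) = 0
      · simp [hdiag i (Finset.mem_insert_self _ _) h]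
      · rw [div_mul_cancel₀ _ h, sub_self]
    · rw [hzw i hi, htri a (Finset.mem_insert_self _ _) i (Finset.mem_insert_of_mem hi) (ha i hi),
        mul_zero, sub_zero]

theorem EReal.exists_coe_ge_of_finset_lt (s : Finset EReal) {m : ℝ} {B : EReal}
    (hm : (m : EReal) < B) (hs : ∀ x ∈ s, x < B) :
    ∃ t : ℝ, m ≤ t ∧ (t : EReal) < B ∧ ∀ x ∈ s, x ≤ t := by
  have hne : (insert (m : EReal) s).Nonempty := Finset.insert_nonempty _ _
  obtain ⟨t, hmax, htB⟩ := EReal.exists_between_coe_real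
    (z := B) ((Finset.max'_lt_iff _ hne).mpr (by simpa [hm] using hs))
  refine ⟨t, ?_, htB, fun x hx => ?_⟩
  · exact_mod_cast ((Finset.le_max' _ _ (Finset.mem_insert_self _ _)).trans_lt hmax).le
  · exact ((Finset.le_max' _ _ (Finset.mem_insert_of_mem hx)).trans_lt hmax).le

theorem LinearMap.range_conj_eq_ker_conj {R M₁ M₂ M₃ N₁ N₂ N₃ : Type*} [Ring R]
    [AddCommGroup M₁] [AddCommGroup M₂] [AddCommGroup M₃]
    [AddCommGroup N₁] [AddCommGroup N₂] [AddCommGroup N₃]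
    [Module R M₁] [Module R M₂] [Module R M₃] [Module R N₁] [Module R N₂] [Module R N₃]
    (e₁ : M₁ ≃ₗ[R] N₁) (e₂ : M₂ ≃ₗ[R] N₂) (e₃ : M₃ ≃ₗ[R] N₃)
    {f : M₁ →ₗ[R] M₂} {g : M₂ →ₗ[R] M₃} (h : LinearMap.range f = LinearMap.ker g) :
    LinearMap.range (e₂.toLinearMap ∘ₗ f ∘ₗ e₁.symm.toLinearMap) =
      LinearMap.ker (e₃.toLinearMap ∘ₗ g ∘ₗ e₂.symm.toLinearMap) := by
  refine (LinearMap.exact_iff.mp ?_).symm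
  refine (Function.Exact.iff_of_ladder_linearEquiv (e₁ := e₁) (e₂ := e₂) (e₃ := e₃)
    ?_ ?_).mpr (LinearMap.exact_iff.mpr h.symm) <;> ext <;> simp

theorem exists_equiv_fin_monotone {α β : Type*} [Finite α] [LinearOrder β] (key : α → β) :
    ∃ e : Fin (Nat.card α) ≃ α, Monotone (key ∘ e) :=
  ⟨(Tuple.sort (key ∘ (Finite.equivFin α).symm)).trans (Finite.equivFin α).symm,
    fun _ _ h => Tuple.monotone_sort (key ∘ (Finite.equivFin α).symm) h⟩

namespace PersMod

variable {F : Type} [Field F]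

section IntervalSum

variable {ι : Type} {bars : ι → ℝ × EReal}

@[ext]
theorem intervalSum_ext {t : ℝ} {z z' : (intervalSum F bars).V t} (h : ∀ k, z.1 k = z'.1 k) :
    z = z' :=
  Subtype.ext (Finsupp.ext h)

@[simp]
theorem intervalSum_zero_apply {t : ℝ} (k : ι) : (0 : (intervalSum F bars).V t).1 k = 0 :=
  rfl

@[simp]
theorem intervalSum_sub_apply {t : ℝ} (z z' : (intervalSum F bars).V t) (k : ι) :
    (z - z').1 k = z.1 k - z'.1 k :=
  rfl

theorem intervalSum_map_apply {s t : ℝ} (h : s ≤ t) (z : (intervalSum F bars).V s) (k : ι) :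
    ((intervalSum F bars).map s t h z).1 k = if alive (bars k) t then z.1 k else 0 :=
  Finsupp.filter_apply _ _ _

theorem alive_of_apply_ne_zero {t : ℝ} (z : (intervalSum F bars).V t) {k : ι}
    (h : z.1 k ≠ 0) : alive (bars k) t :=
  (Finsupp.mem_supported F z.1).mp z.2 (Finsupp.mem_support_iff.mpr h)

theorem intervalSum_map_eq_zero {s t : ℝ} (h : s ≤ t) (z : (intervalSum F bars).V s)
    (hz : ∀ k, z.1 k ≠ 0 → ¬ alive (bars k) t) : (intervalSum F bars).map s t h z = 0 := by
  ext k
  rw [intervalSum_map_apply]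
  by_cases hk : z.1 k = 0
  · simp [hk]
  · simp [hz k hk]

variable (bars) in
noncomputable def intervalCoord (t : ℝ) (k : ι) : (intervalSum F bars).V t →ₗ[F] F :=
  (Finsupp.lapply k).comp (Finsupp.supported F F {i | alive (bars i) t}).subtype

@[simp]
theorem intervalCoord_apply {t : ℝ} {k : ι} (z : (intervalSum F bars).V t) :
    intervalCoord bars t k z = z.1 k :=
  rfl

theorem intervalCoord_eq_zero {t : ℝ} {k : ι} (hk : ¬ alive (bars k) t) :
    intervalCoord bars t k = (0 : (intervalSum F bars).V t →ₗ[F] F) := by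
  ext z
  by_contra hz
  exact hk (alive_of_apply_ne_zero z hz)

variable (F bars) in
noncomputable def intervalGen {t : ℝ} {k : ι} (hk : alive (bars k) t) :
    (intervalSum F bars).V t :=
  ⟨Finsupp.single k 1, Finsupp.single_mem_supported F 1 hk⟩

theorem intervalGen_apply {t : ℝ} {k : ι} (hk : alive (bars k) t) (i : ι) :
    (intervalGen F bars hk).1 i = if k = i then 1 else 0 :=
  Finsupp.single_apply

end IntervalSum

theorem le_barLength_iff {p : ℝ × EReal} {δ : ℝ} :
    (δ : EReal) ≤ barLength p ↔ ((p.1 + δ : ℝ) : EReal) ≤ p.2 := by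
  rw [barLength, EReal.le_sub_iff_add_le (.inl (EReal.coe_ne_bot _)) (.inl (EReal.coe_ne_top _)),
    EReal.coe_add, add_comm]

theorem lt_barLength_iff {p : ℝ × EReal} {δ : ℝ} :
    (δ : EReal) < barLength p ↔ ((p.1 + δ : ℝ) : EReal) < p.2 := by
  rw [barLength, EReal.lt_sub_iff_add_lt (.inl (EReal.coe_ne_bot _)) (.inl (EReal.coe_ne_top _)),
    EReal.coe_add, add_comm]

theorem le_barLength_of_le {p : ℝ × EReal} {r δ : ℝ} (hr : p.1 ≤ r)
    (h : ((r + δ : ℝ) : EReal) ≤ p.2) : (δ : EReal) ≤ barLength p :=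
  le_barLength_iff.mpr ((EReal.coe_le_coe_iff.mpr (by linarith)).trans h)

theorem alive_of_le_barLength {p : ℝ × EReal} {r δ : ℝ} (h : (δ : EReal) ≤ barLength p)
    (hr : p.1 ≤ r) (hrδ : r < p.1 + δ) : alive p r :=
  ⟨hr, (EReal.coe_lt_coe_iff.mpr hrδ).trans_le (le_barLength_iff.mp h)⟩

theorem lt_barLength_of_map_apply_ne_zero {ι : Type} {bars : ι → ℝ × EReal} {s t : ℝ}
    (h : s ≤ t) (z : (intervalSum F bars).V s) {k : ι}
    (hk : ((intervalSum F bars).map s t h z).1 k ≠ 0) :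
    ((t - s : ℝ) : EReal) < barLength (bars k) := by
  rw [intervalSum_map_apply] at hk
  split_ifs at hk with ht
  · have hs := alive_of_apply_ne_zero z hk
    exact lt_barLength_iff.mpr ((EReal.coe_le_coe_iff.mpr (by linarith [hs.1])).trans_lt ht.2)
  · exact absurd rfl hk

def IsNatural {M N : PersMod F} (φ : ∀ t, M.V t →ₗ[F] N.V t) : Prop :=
  ∀ s t (h : s ≤ t) (x : M.V s), φ t (M.map s t h x) = N.map s t h (φ s x)

theorem IsNatural.exists_apply_ne_zero_death_le {ιU ιV : Type} {bU : ιU → ℝ × EReal}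
    {bV : ιV → ℝ × EReal}
    {φ : ∀ t, (intervalSum F bU).V t →ₗ[F] (intervalSum F bV).V t} (hφ : IsNatural φ)
    {t : ℝ} (z : (intervalSum F bU).V t) {i : ιV} (hi : (φ t z).1 i ≠ 0) :
    ∃ k, z.1 k ≠ 0 ∧ (bV i).2 ≤ (bU k).2 := by
  -- otherwise push `z` past all deaths in its support, but not past the death of `i`
  by_contra! hlt
  have hti := alive_of_apply_ne_zero _ hi
  obtain ⟨t', htt', ht'i, hle⟩ := EReal.exists_coe_ge_of_finset_lt
    (z.1.support.image fun k => (bU k).2) hti.2 (by simpa using hlt)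
  have hzero : (intervalSum F bU).map t t' htt' z = 0 :=
    intervalSum_map_eq_zero _ _ fun k hk hk' =>
      (hk'.2.trans_le (hle _ (Finset.mem_image_of_mem _ (Finsupp.mem_support_iff.mpr hk)))).false
  have hcoord := congrArg (fun x => x.1 i) (hφ t t' htt' z)
  simp only [hzero, map_zero, intervalSum_zero_apply, intervalSum_map_apply,
    if_pos (show alive (bV i) t' from ⟨hti.1.trans htt', ht'i⟩)] at hcoord
  exact hi hcoord.symm

theorem IsNatural.conj {M M' N N' : PersMod F} {eM : ∀ t, M.V t ≃ₗ[F] M'.V t}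
    {eN : ∀ t, N.V t ≃ₗ[F] N'.V t} (heM : IsNatural fun t => (eM t).toLinearMap)
    (heN : IsNatural fun t => (eN t).toLinearMap) {φ : ∀ t, M.V t →ₗ[F] N.V t}
    (hφ : IsNatural φ) :
    IsNatural fun t => (eN t).toLinearMap ∘ₗ φ t ∘ₗ (eM t).symm.toLinearMap := by
  intro s t h z
  have hsymm : (eM t).symm (M'.map s t h z) = M.map s t h ((eM s).symm z) := by
    have := heM s t h ((eM s).symm z)
    simp only [LinearEquiv.coe_coe, LinearEquiv.apply_symm_apply] at this
    exact (eM t).symm_apply_eq.mpr this.symm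
  simp only [LinearMap.comp_apply, LinearEquiv.coe_coe, hsymm]
  rw [hφ s t h]
  exact heN s t h _

abbrev LongBars {ι : Type} (bars : ι → ℝ × EReal) (δ : ℝ) : Type :=
  {i : ι // (δ : EReal) ≤ barLength (bars i)}

section Pivots

variable {ιU ιW : Type} {bU : ιU → ℝ × EReal} {bW : ιW → ℝ × EReal} {δ : ℝ}

noncomputable def pivotCoordU (t : ℝ) :
    Option (LongBars bU δ ⊕ LongBars bW δ) → (intervalSum F bU).V t →ₗ[F] F
  | some (.inl k) => intervalCoord bU t k.1
  | _ => 0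

noncomputable def pivotCoordW (t : ℝ) :
    Option (LongBars bU δ ⊕ LongBars bW δ) → (intervalSum F bW).V t →ₗ[F] F
  | some (.inr k) => intervalCoord bW t k.1
  | _ => 0

theorem pivotCoordU_map_or {s t : ℝ} (h : s ≤ t)
    (p : Option (LongBars bU δ ⊕ LongBars bW δ)) :
    (∀ z, pivotCoordU t p ((intervalSum F bU).map s t h z) = pivotCoordU s p z) ∨
      pivotCoordU (F := F) t p = 0 := by
  rcases p with _ | k | k
  · exact .inr rfl
  · by_cases hk : alive (bU k.1) t
    · exact .inl fun z => by simp [pivotCoordU, intervalSum_map_apply, hk]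
    · exact .inr (intervalCoord_eq_zero hk)
  · exact .inr rfl

theorem pivotCoordW_map_or {s t : ℝ} (h : s ≤ t)
    (p : Option (LongBars bU δ ⊕ LongBars bW δ)) :
    (∀ z, pivotCoordW t p ((intervalSum F bW).map s t h z) = pivotCoordW s p z) ∨
      pivotCoordW (F := F) t p = 0 := by
  rcases p with _ | k | k
  · exact .inr rfl
  · exact .inr rfl
  · by_cases hk : alive (bW k.1) t
    · exact .inl fun z => by simp [pivotCoordW, intervalSum_map_apply, hk]
    · exact .inr (intervalCoord_eq_zero hk)

end Pivots

section Reduction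

variable {ιU ιV ιW : Type} {bU : ιU → ℝ × EReal} {bV : ιV → ℝ × EReal}
  {bW : ιW → ℝ × EReal} {δ : ℝ} (hδ : 0 < δ)
  (f : ∀ t, (intervalSum F bU).V t →ₗ[F] (intervalSum F bV).V t)
  (g : ∀ t, (intervalSum F bV).V t →ₗ[F] (intervalSum F bW).V t) {n : ℕ} (v : Fin n → ιV)

local notation "shiftV" =>
  PersMod.map (intervalSum F bV) _ _ (le_add_of_nonneg_right (le_of_lt hδ))

/-- `x` is the reduced element at the birth of the `j`-th bar, `p` its pivot and, if `p` is a bar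
of `U`, `u` a lift of `x` pushed by `δ`; `piv` holds the pivots of the earlier bars. -/
structure IsPivot (piv : Fin n → Option (LongBars bU δ ⊕ LongBars bW δ)) (j : Fin n)
    (x : (intervalSum F bV).V (bV (v j)).1) (u : (intervalSum F bU).V ((bV (v j)).1 + δ))
    (p : LongBars bU δ ⊕ LongBars bW δ) : Prop where
  apply_self : x.1 (v j) = 1
  apply_of_lt : ∀ i, j < i → x.1 (v i) = 0
  coordW_of_lt : ∀ j' < j, pivotCoordW _ (piv j') (g _ (shiftV x)) = 0
  coordU_of_lt : ∀ j' < j, pivotCoordU _ (piv j') u = 0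
  of_inr : ∀ k, p = .inr k → (g _ (shiftV x)).1 k.1 ≠ 0
  of_inl : ∀ k, p = .inl k → f _ u = shiftV x ∧ u.1 k.1 ≠ 0

variable {hδ f g v}

theorem IsPivot.ne_of_lt {piv : Fin n → Option (LongBars bU δ ⊕ LongBars bW δ)} {j j' : Fin n}
    {x : (intervalSum F bV).V (bV (v j)).1} {u : (intervalSum F bU).V ((bV (v j)).1 + δ)}
    {p : LongBars bU δ ⊕ LongBars bW δ} (H : IsPivot hδ f g v piv j x u p) (hj' : j' < j) :
    piv j' ≠ some p := by
  intro hp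
  rcases p with k | k
  · have h := H.coordU_of_lt j' hj'
    rw [hp] at h
    exact (H.of_inl k rfl).2 h
  · have h := H.coordW_of_lt j' hj'
    rw [hp] at h
    exact H.of_inr k rfl h

section Echelon

variable (hmono : Monotone fun j => (bV (v j)).1)
  (x : ∀ j : Fin n, (intervalSum F bV).V (bV (v j)).1)
  (u : ∀ j : Fin n, (intervalSum F bU).V ((bV (v j)).1 + δ)) (j₀ : Fin n)

noncomputable def pushedX (j : {j // j < j₀}) : (intervalSum F bV).V (bV (v j₀)).1 :=
  (intervalSum F bV).map _ _ (hmono j.2.le) (x j)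

noncomputable def pushedU (j : {j // j < j₀}) : (intervalSum F bU).V ((bV (v j₀)).1 + δ) :=
  (intervalSum F bU).map _ _ (add_le_add_left (hmono j.2.le) δ) (u j)

variable {hmono x u j₀}

theorem sub_apply_of_mem_span_pushedX
    (hx : ∀ j < j₀, ∀ i, j < i → (x j).1 (v i) = 0)
    (z : (intervalSum F bV).V (bV (v j₀)).1) {w : (intervalSum F bV).V (bV (v j₀)).1}
    (hw : w ∈ Submodule.span F (Set.range (pushedX hmono x j₀))) {i : Fin n} (hi : j₀ ≤ i) :
    (z - w).1 (v i) = z.1 (v i) := by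
  suffices Submodule.span F (Set.range (pushedX hmono x j₀)) ≤
      LinearMap.ker (intervalCoord bV _ (v i)) by
    rw [intervalSum_sub_apply, ← intervalCoord_apply (t := (bV (v j₀)).1) w, this hw, sub_zero]
  rw [Submodule.span_le, Set.range_subset_iff]
  intro j
  simp [pushedX, intervalSum_map_apply, hx j.1 j.2 i (j.2.trans_le hi)]

theorem span_pushed_le {J : Finset {j // j < j₀}} (hf : IsNatural f)
    (hJ : ∀ j ∈ J, f _ (u j) = shiftV (x j)) :
    Submodule.span F ((fun j => (pushedU hmono u j₀ j, pushedX hmono x j₀ j)) '' J) ≤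
      LinearMap.ker (f _ ∘ₗ LinearMap.fst F _ _ - shiftV ∘ₗ LinearMap.snd F _ _) ⊓
        (Submodule.span F (Set.range (pushedX hmono x j₀))).comap (LinearMap.snd F _ _) := by
  rw [Submodule.span_le]
  rintro _ ⟨j, hj, rfl⟩
  refine ⟨?_, Submodule.subset_span ⟨j, rfl⟩⟩
  simp only [SetLike.mem_coe, LinearMap.mem_ker, LinearMap.sub_apply, LinearMap.comp_apply,
    LinearMap.fst_apply, LinearMap.snd_apply, pushedU, pushedX, sub_eq_zero]
  rw [hf, hJ j hj, PersMod.map_comp, PersMod.map_comp]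

variable {piv : Fin n → Option (LongBars bU δ ⊕ LongBars bW δ)}

theorem exists_mem_span_pushedX_forall_pivotCoordW_eq_zero (hg : IsNatural g)
    (hS : ∀ j < j₀, ∃ p, piv j = some p ∧ IsPivot hδ f g v piv j (x j) (u j) p)
    (z : (intervalSum F bV).V (bV (v j₀)).1) :
    ∃ w ∈ Submodule.span F (Set.range (pushedX hmono x j₀)),
      ∀ j < j₀, pivotCoordW _ (piv j) (g _ (shiftV (z - w))) = 0 := by
  set φ : {j // j < j₀} → (intervalSum F bV).V (bV (v j₀)).1 →ₗ[F] F :=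
    fun j => pivotCoordW _ (piv j) ∘ₗ g _ ∘ₗ shiftV
  have hφ : ∀ i j : {j // j < j₀}, φ j (pushedX hmono x j₀ i) =
      pivotCoordW _ (piv j) ((intervalSum F bW).map _ _ (add_le_add_left (hmono i.2.le) δ)
        (g _ (shiftV (x i)))) := by
    intro i j
    simp only [φ, LinearMap.comp_apply]
    rw [← hg, pushedX, PersMod.map_comp, PersMod.map_comp]
  have htri : ∀ i ∈ Finset.univ, ∀ j ∈ Finset.univ, j < i →
      φ j (pushedX hmono x j₀ i) = 0 := by
    intro i _ j _ hji
    obtain ⟨p, -, H⟩ := hS i i.2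
    rw [hφ]
    rcases pivotCoordW_map_or (F := F) (add_le_add_left (hmono i.2.le) δ) (piv j) with h | h
    · rw [h]
      exact H.coordW_of_lt j hji
    · rw [h, LinearMap.zero_apply]
  have hdiag : ∀ i ∈ Finset.univ, φ i (pushedX hmono x j₀ i) = 0 → φ i = 0 := by
    intro i _ hi
    obtain ⟨p, hp, H⟩ := hS i i.2
    rcases pivotCoordW_map_or (F := F) (add_le_add_left (hmono i.2.le) δ) (piv i) with h | h
    · rcases p with k | k
      · ext
        simp [φ, hp, pivotCoordW]
      · rw [hφ, h, hp] at hi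
        exact absurd hi (H.of_inr k rfl)
    · ext
      simp [φ, h]
  obtain ⟨w, hw, hzw⟩ :=
    exists_mem_span_forall_apply_sub_eq_zero Finset.univ _ φ htri hdiag z
  exact ⟨w, by simpa using hw, fun j hj => hzw ⟨j, hj⟩ (Finset.mem_univ _)⟩

theorem exists_isPivot_of_ne_zero (hg : IsNatural g) {x' : (intervalSum F bV).V (bV (v j₀)).1}
    (h1 : x'.1 (v j₀) = 1) (h2 : ∀ i, j₀ < i → x'.1 (v i) = 0)
    (hW : ∀ j < j₀, pivotCoordW _ (piv j) (g _ (shiftV x')) = 0)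
    (hne : g _ (shiftV x') ≠ 0) :
    ∃ p, IsPivot hδ f g v piv j₀ x' 0 p := by
  obtain ⟨k, hk⟩ : ∃ k, (g _ (shiftV x')).1 k ≠ 0 := by
    by_contra! h
    exact hne (intervalSum_ext fun k => by simp [h k])
  have hlong : (δ : EReal) ≤ barLength (bW k) := by
    rw [hg] at hk
    have := lt_barLength_of_map_apply_ne_zero _ _ hk
    rw [add_sub_cancel_left] at this
    exact this.le
  refine ⟨.inr ⟨k, hlong⟩,
    { apply_self := h1
      apply_of_lt := h2
      coordW_of_lt := hW
      coordU_of_lt := fun _ _ => map_zero _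
      of_inr := ?_
      of_inl := by rintro _ ⟨⟩ }⟩
  rintro _ ⟨⟩
  exact hk

theorem exists_mem_span_pushedX_forall_pivotCoordU_eq_zero (hf : IsNatural f)
    (hS : ∀ j < j₀, ∃ p, piv j = some p ∧ IsPivot hδ f g v piv j (x j) (u j) p)
    {z : (intervalSum F bV).V (bV (v j₀)).1} {u₀ : (intervalSum F bU).V ((bV (v j₀)).1 + δ)}
    (hu₀ : f _ u₀ = shiftV z) :
    ∃ w ∈ Submodule.span F (Set.range (pushedX hmono x j₀)), ∃ u',
      f _ u' = shiftV (z - w) ∧ ∀ j < j₀, pivotCoordU _ (piv j) u' = 0 := by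
  set J := Finset.univ.filter fun j : {j // j < j₀} => ∃ k, piv j.1 = some (.inl k)
  have hJ : ∀ j ∈ J, ∃ k, piv j.1 = some (.inl k) ∧
      IsPivot hδ f g v piv j (x j) (u j) (.inl k) := by
    intro j hj
    obtain ⟨k, hk⟩ := (Finset.mem_filter.mp hj).2
    obtain ⟨p, hp, H⟩ := hS j.1 j.2
    obtain rfl : p = .inl k := Option.some.inj (hp.symm.trans hk)
    exact ⟨k, hk, H⟩
  set y := fun i => (pushedU hmono u j₀ i, pushedX hmono x j₀ i)
  set φ : {j // j < j₀} → _ →ₗ[F] F :=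
    fun j => pivotCoordU _ (piv j) ∘ₗ LinearMap.fst F _ ((intervalSum F bV).V (bV (v j₀)).1)
  have htri : ∀ i ∈ J, ∀ j ∈ J, j < i → φ j (y i) = 0 := by
    intro i _ j _ hji
    obtain ⟨p, -, H⟩ := hS i i.2
    rcases pivotCoordU_map_or (F := F) (add_le_add_left (hmono i.2.le) δ) (piv j) with h | h
    · simp only [φ, y, pushedU, LinearMap.comp_apply, LinearMap.fst_apply]
      rw [h]
      exact H.coordU_of_lt j hji
    · simp [φ, h]
  have hdiag : ∀ i ∈ J, φ i (y i) = 0 → φ i = 0 := by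
    intro i hi hyi
    obtain ⟨k, hk, H⟩ := hJ i hi
    rcases pivotCoordU_map_or (F := F) (add_le_add_left (hmono i.2.le) δ) (piv i) with h | h
    · simp only [φ, y, pushedU, LinearMap.comp_apply, LinearMap.fst_apply] at hyi
      rw [h, hk] at hyi
      exact absurd hyi (H.of_inl k rfl).2
    · ext <;> simp [φ, h, LinearMap.zero_apply]
  obtain ⟨w, hw, hzw⟩ := exists_mem_span_forall_apply_sub_eq_zero J y φ htri hdiag (u₀, z)
  have hlift : ∀ j ∈ J, f _ (u j) = shiftV (x j) := fun j hj => by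
    obtain ⟨k, -, H⟩ := hJ j hj
    exact (H.of_inl k rfl).1
  obtain ⟨hw₁, hw₂⟩ := Submodule.mem_inf.mp (span_pushed_le (hδ := hδ) hf hlift hw)
  have hfw : f _ w.1 = shiftV w.2 := sub_eq_zero.mp hw₁
  refine ⟨w.2, hw₂, u₀ - w.1, ?_, fun j hj => ?_⟩
  · rw [map_sub, map_sub, hu₀, hfw]
  · rcases hpj : piv j with _ | k | k
    · rfl
    · simpa [φ, hpj] using hzw ⟨j, hj⟩ (Finset.mem_filter.mpr ⟨Finset.mem_univ _, k, hpj⟩)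
    · rfl

theorem exists_isPivot_of_eq_zero (hmono : Monotone fun j => (bV (v j)).1) (hf : IsNatural f)
    (hexact : ∀ t, LinearMap.range (f t) = LinearMap.ker (g t))
    (hlongV : ((2 * δ : ℝ) : EReal) ≤ barLength (bV (v j₀)))
    (hS : ∀ j < j₀, ∃ p, piv j = some p ∧ IsPivot hδ f g v piv j (x j) (u j) p)
    {z : (intervalSum F bV).V (bV (v j₀)).1}
    (h1 : z.1 (v j₀) = 1) (h2 : ∀ i, j₀ < i → z.1 (v i) = 0)
    (hzero : g _ (shiftV z) = 0) :
    ∃ x' u' p, IsPivot hδ f g v piv j₀ x' u' p := by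
  obtain ⟨u₀, hu₀⟩ : shiftV z ∈ LinearMap.range (f _) := by
    rw [hexact]
    exact hzero
  obtain ⟨w, hw, u', hfu, hU⟩ :=
    exists_mem_span_pushedX_forall_pivotCoordU_eq_zero (hmono := hmono) hf hS hu₀
  have hx : ∀ j < j₀, ∀ i, j < i → (x j).1 (v i) = 0 := fun j hj =>
    (hS j hj).choose_spec.2.apply_of_lt
  have hgx : g _ (shiftV (z - w)) = 0 := by
    rw [← hfu]
    exact LinearMap.mem_ker.mp (hexact _ ▸ LinearMap.mem_range_self _ _)
  have hz1 : (z - w).1 (v j₀) = 1 := by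
    rw [sub_apply_of_mem_span_pushedX hx _ hw le_rfl, h1]
  have halive : alive (bV (v j₀)) ((bV (v j₀)).1 + δ) :=
    alive_of_le_barLength hlongV (by linarith) (by linarith)
  obtain ⟨k, hk, hdeath⟩ := hf.exists_apply_ne_zero_death_le u' (i := v j₀) (by
    rw [hfu, intervalSum_map_apply, if_pos halive, hz1]
    exact one_ne_zero)
  have hlongU : (δ : EReal) ≤ barLength (bU k) := by
    refine le_barLength_of_le (alive_of_apply_ne_zero u' hk).1 (le_trans ?_ hdeath)
    rw [show (bV (v j₀)).1 + δ + δ = (bV (v j₀)).1 + 2 * δ by ring]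
    exact le_barLength_iff.mp hlongV
  refine ⟨z - w, u', .inl ⟨k, hlongU⟩,
    { apply_self := hz1
      apply_of_lt := fun i hi => by rw [sub_apply_of_mem_span_pushedX hx _ hw hi.le, h2 i hi]
      coordW_of_lt := fun _ _ => by rw [hgx, map_zero]
      coordU_of_lt := hU
      of_inr := by rintro _ ⟨⟩
      of_inl := ?_ }⟩
  rintro _ ⟨⟩
  exact ⟨hfu, hk⟩

theorem exists_isPivot (hmono : Monotone fun j => (bV (v j)).1) (hinj : Function.Injective v)
    (hf : IsNatural f) (hg : IsNatural g)
    (hexact : ∀ t, LinearMap.range (f t) = LinearMap.ker (g t))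
    (hlongV : ∀ j, ((2 * δ : ℝ) : EReal) ≤ barLength (bV (v j)))
    (hS : ∀ j < j₀, ∃ p, piv j = some p ∧ IsPivot hδ f g v piv j (x j) (u j) p) :
    ∃ x' u' p, IsPivot hδ f g v piv j₀ x' u' p := by
  have halive : alive (bV (v j₀)) (bV (v j₀)).1 :=
    alive_of_le_barLength (hlongV j₀) le_rfl (by linarith)
  have hx : ∀ j < j₀, ∀ i, j < i → (x j).1 (v i) = 0 := fun j hj =>
    (hS j hj).choose_spec.2.apply_of_lt
  obtain ⟨w, hw, hW⟩ := exists_mem_span_pushedX_forall_pivotCoordW_eq_zero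
    (hmono := hmono) hg hS (intervalGen F bV halive)
  have h1 : (intervalGen F bV halive - w).1 (v j₀) = 1 := by
    rw [sub_apply_of_mem_span_pushedX hx _ hw le_rfl, intervalGen_apply, if_pos rfl]
  have h2 : ∀ i, j₀ < i → (intervalGen F bV halive - w).1 (v i) = 0 := fun i hi => by
    rw [sub_apply_of_mem_span_pushedX hx _ hw hi.le, intervalGen_apply, if_neg (hinj.ne hi.ne)]
  by_cases hzero : g _ (shiftV (intervalGen F bV halive - w)) = 0
  · exact exists_isPivot_of_eq_zero hmono hf hexact (hlongV j₀) hS h1 h2 hzero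
  · obtain ⟨p, H⟩ := exists_isPivot_of_ne_zero hg h1 h2 hW hzero
    exact ⟨_, _, p, H⟩

end Echelon

theorem IsPivot.congr {piv piv' : Fin n → Option (LongBars bU δ ⊕ LongBars bW δ)} {j : Fin n}
    {x : (intervalSum F bV).V (bV (v j)).1} {u : (intervalSum F bU).V ((bV (v j)).1 + δ)}
    {p : LongBars bU δ ⊕ LongBars bW δ} (H : IsPivot hδ f g v piv j x u p)
    (h : ∀ j' < j, piv j' = piv' j') : IsPivot hδ f g v piv' j x u p :=
  { H with
    coordW_of_lt := fun j' hj' => h j' hj' ▸ H.coordW_of_lt j' hj'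
    coordU_of_lt := fun j' hj' => h j' hj' ▸ H.coordU_of_lt j' hj' }

theorem exists_forall_lt_isPivot (hmono : Monotone fun j => (bV (v j)).1)
    (hinj : Function.Injective v) (hf : IsNatural f) (hg : IsNatural g)
    (hexact : ∀ t, LinearMap.range (f t) = LinearMap.ker (g t))
    (hlongV : ∀ j, ((2 * δ : ℝ) : EReal) ≤ barLength (bV (v j))) :
    ∀ m ≤ n, ∃ (x : ∀ j : Fin n, (intervalSum F bV).V (bV (v j)).1)
      (u : ∀ j : Fin n, (intervalSum F bU).V ((bV (v j)).1 + δ))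
      (piv : Fin n → Option (LongBars bU δ ⊕ LongBars bW δ)),
      ∀ j : Fin n, (j : ℕ) < m →
        ∃ p, piv j = some p ∧ IsPivot hδ f g v piv j (x j) (u j) p := by
  intro m
  induction m with
  | zero => exact fun _ => ⟨0, 0, fun _ => none, fun j hj => absurd hj (Nat.not_lt_zero _)⟩
  | succ m ih =>
    intro hm
    obtain ⟨x, u, piv, hS⟩ := ih (Nat.le_of_succ_le hm)
    set j₀ : Fin n := ⟨m, hm⟩
    obtain ⟨x', u', p, H⟩ :=
      exists_isPivot (j₀ := j₀) hmono hinj hf hg hexact hlongV fun j hj => hS j hj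
    have hpiv : ∀ j < j₀, piv j = Function.update piv j₀ (some p) j := fun j hj =>
      (Function.update_of_ne hj.ne _ _).symm
    refine ⟨Function.update x j₀ x', Function.update u j₀ u',
      Function.update piv j₀ (some p), fun j hj => ?_⟩
    rcases Nat.lt_succ_iff_lt_or_eq.mp hj with hj | hj
    · have hne : j ≠ j₀ := Fin.ne_of_lt hj
      obtain ⟨p', hp', H'⟩ := hS j hj
      rw [Function.update_of_ne hne, Function.update_of_ne hne, Function.update_of_ne hne]
      exact ⟨p', hp', H'.congr fun j' hj' => hpiv j' (hj'.trans hj)⟩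
    · obtain rfl : j = j₀ := Fin.ext hj
      rw [Function.update_self, Function.update_self, Function.update_self]
      exact ⟨p, rfl, H.congr hpiv⟩

theorem bCount_two_mul_le_of_exact (hδ : 0 < δ) [Finite (LongBars bU δ)]
    [Finite (LongBars bW δ)] (hf : IsNatural f) (hg : IsNatural g)
    (hexact : ∀ t, LinearMap.range (f t) = LinearMap.ker (g t)) :
    bCount bV (2 * δ) ≤ bCount bU δ + bCount bW δ := by
  by_cases hV : Finite (LongBars bV (2 * δ))
  swap
  · -- `Nat.card` of an infinite type is `0`
    have : Infinite (LongBars bV (2 * δ)) := not_finite_iff_infinite.mp hV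
    exact (Nat.card_eq_zero_of_infinite (α := LongBars bV (2 * δ))).trans_le (Nat.zero_le _)
  obtain ⟨e, he⟩ := exists_equiv_fin_monotone fun i : LongBars bV (2 * δ) => (bV i.1).1
  obtain ⟨x, u, piv, hS⟩ := exists_forall_lt_isPivot (hδ := hδ) (v := fun j => (e j).1) he
    (Subtype.val_injective.comp e.injective) hf hg hexact (fun j => (e j).2) _ le_rfl
  choose p hp H using fun j : Fin _ => hS j j.2
  have hp_inj : Function.Injective p := by
    intro a b hab
    by_contra hne
    rcases lt_or_gt_of_ne hne with h | h
    · exact (H b).ne_of_lt h (hab ▸ hp a)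
    · exact (H a).ne_of_lt h (hab ▸ hp b)
  have hcard := Nat.card_le_card_of_injective p hp_inj
  rwa [Nat.card_fin, Nat.card_sum] at hcard

end Reduction

end PersMod

theorem stmt7_general (F : Type) [Field F] (U V W : PersMod F)
    {ιU ιV ιW : Type} (barsU : ιU → ℝ × EReal) (barsV : ιV → ℝ × EReal)
    (barsW : ιW → ℝ × EReal)
    (hU : HasBarcode F U barsU) (hV : HasBarcode F V barsV) (hW : HasBarcode F W barsW)
    (f : ∀ t, U.V t →ₗ[F] V.V t) (g : ∀ t, V.V t →ₗ[F] W.V t)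
    (hf : ∀ s t (h : s ≤ t) (x : U.V s), f t (U.map s t h x) = V.map s t h (f s x))
    (hg : ∀ s t (h : s ≤ t) (x : V.V s), g t (V.map s t h x) = W.map s t h (g s x))
    (hexact : ∀ t, LinearMap.range (f t) = LinearMap.ker (g t))
    (hmodU : ∀ ε > (0 : ℝ), Finite {i : ιU // (ε : EReal) ≤ barLength (barsU i)})
    (hmodW : ∀ ε > (0 : ℝ), Finite {i : ιW // (ε : EReal) ≤ barLength (barsW i)})
    (ε : ℝ) (hε : 0 < ε) :
    bCount barsV (2 * ε) ≤ bCount barsU ε + bCount barsW ε := by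
  obtain ⟨eU, heU⟩ := hU
  obtain ⟨eV, heV⟩ := hV
  obtain ⟨eW, heW⟩ := hW
  have : Finite (LongBars barsU ε) := hmodU ε hε
  have : Finite (LongBars barsW ε) := hmodW ε hε
  exact bCount_two_mul_le_of_exact hε (IsNatural.conj heU heV hf) (IsNatural.conj heV heW hg)
    fun t => LinearMap.range_conj_eq_ker_conj _ _ _ (hexact t)

/-- If `U → V → W` is an exact sequence of moderate persistence modules
(exact at `V`), then for every `ε > 0`, `b_{2ε}(V) ≤ b_ε(U) + b_ε(W)`. -/
theorem stmt7 (F : Type) [Field F] (U V W : PersMod F)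
    {ιU ιV ιW : Type} (barsU : ιU → ℝ × EReal) (barsV : ιV → ℝ × EReal)
    (barsW : ιW → ℝ × EReal)
    (hU : HasBarcode F U barsU) (hV : HasBarcode F V barsV) (hW : HasBarcode F W barsW)
    (f : ∀ t, U.V t →ₗ[F] V.V t) (g : ∀ t, V.V t →ₗ[F] W.V t)
    (hf : ∀ s t (h : s ≤ t) (x : U.V s), f t (U.map s t h x) = V.map s t h (f s x))
    (hg : ∀ s t (h : s ≤ t) (x : V.V s), g t (V.map s t h x) = W.map s t h (g s x))
    (hexact : ∀ t, LinearMap.range (f t) = LinearMap.ker (g t))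
    (hmodU : ∀ ε > (0 : ℝ), Finite {i : ιU // (ε : EReal) ≤ barLength (barsU i)})
    (hmodV : ∀ ε > (0 : ℝ), Finite {i : ιV // (ε : EReal) ≤ barLength (barsV i)})
    (hmodW : ∀ ε > (0 : ℝ), Finite {i : ιW // (ε : EReal) ≤ barLength (barsW i)})
    (ε : ℝ) (hε : 0 < ε) :
    bCount barsV (2 * ε) ≤ bCount barsU ε + bCount barsW ε :=
  stmt7_general F U V W barsU barsV barsW hU hV hW f g hf hg hexact hmodU hmodW ε hε
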